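/- Given a matrix M = [π_{ij}] ∈ Π_n (indices 0 ≤ i < 2n, 0 ≤ j < n), define the binary n²×n² matrix A = [α_{ij}] by setting α_{ij} = 1 if and only if there exist s,t ∈ {0,1,...,n−1} with i = s·n + π_{s,t} − 1 and j = t·n + π_{n+t,s} − 1, and α_{ij} = 0 otherwise. Then A is an S-permutation matrix. -/
import Mathlib


/-- The index `s*n + k` of the `n² × n²` matrix corresponding to block
coordinate `s` and within-block coordinate `k`. -/
def idx (n : ℕ) (s k : Fin n) : Fin (n ^ 2) :=
  ⟨s.val * n + k.val, by
    have hs := s.isLt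
    have hk := k.isLt
    rw [pow_two]
    nlinarith⟩

/-- Row `s` (with `0 ≤ s < n`) of a `(2n) × n` matrix, as an index in `Fin (2n)`. -/
def rowT (n : ℕ) (s : Fin n) : Fin (2 * n) := ⟨s.val, by have := s.isLt; omega⟩

/-- Row `n + t` (with `0 ≤ t < n`) of a `(2n) × n` matrix, as an index in `Fin (2n)`. -/
def rowB (n : ℕ) (t : Fin n) : Fin (2 * n) := ⟨n + t.val, by have := t.isLt; omega⟩

/-- `Π_n`: every row of the `(2n) × n` matrix is a permutation of `{1,…,n}`. -/
def IsPiMatrix (n : ℕ) (M : Fin (2 * n) → Fin n → ℕ) : Prop :=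
  ∀ i : Fin (2 * n), Finset.image (M i) Finset.univ = Finset.Icc 1 n

/-- A matrix is binary if all its entries are `0` or `1`. -/
def Binary01 {α β : Type*} (A : α → β → ℕ) : Prop :=
  ∀ i j, A i j = 0 ∨ A i j = 1

/-- An S-permutation matrix: a binary `n² × n²` permutation matrix
(exactly one `1` in every row and every column) such that each `n × n`
block contains exactly one entry equal to `1`. -/
def IsSPerm (n : ℕ) (A : Fin (n ^ 2) → Fin (n ^ 2) → ℕ) : Prop :=
  Binary01 A ∧
  (∀ i, ∃! j, A i j = 1) ∧
  (∀ j, ∃! i, A i j = 1) ∧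
  (∀ s t : Fin n, ∃! kl : Fin n × Fin n, A (idx n s kl.1) (idx n t kl.2) = 1)


lemma mul_add_inj' {n s s' a a' : ℕ} (hn : 0 < n) (ha : a < n) (ha' : a' < n)
    (h : s * n + a = s' * n + a') : s = s' ∧ a = a' := by
  have h1 : (s * n + a) / n = s := by
    rw [mul_comm, Nat.mul_add_div hn, Nat.div_eq_of_lt ha, add_zero]
  have h2 : (s' * n + a') / n = s' := by
    rw [mul_comm, Nat.mul_add_div hn, Nat.div_eq_of_lt ha', add_zero]
  have hs : s = s' := by rw [← h1, ← h2, h]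
  subst hs
  exact ⟨rfl, by omega⟩

/-- For `M = [π_{ij}] ∈ Π_n`, the binary `n² × n²` matrix `A`
with `α_{ij} = 1` iff there are `s, t ∈ {0,…,n−1}` with
`i = s·n + π_{s,t} − 1` and `j = t·n + π_{n+t,s} − 1` (and `α_{ij} = 0`
otherwise) is an S-permutation matrix. -/
theorem sperm_of_piMatrix (n : ℕ) (hn : 0 < n)
    (M : Fin (2 * n) → Fin n → ℕ) (hM : IsPiMatrix n M)
    (A : Fin (n ^ 2) → Fin (n ^ 2) → ℕ)
    (hbin : Binary01 A)
    (hA : ∀ i j, A i j = 1 ↔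
      ∃ s t : Fin n, (i : ℕ) = s.val * n + M (rowT n s) t - 1 ∧
        (j : ℕ) = t.val * n + M (rowB n t) s - 1) :
    IsSPerm n A := by
  have hmem : ∀ (i : Fin (2 * n)) (t : Fin n), 1 ≤ M i t ∧ M i t ≤ n := by
    intro i t
    have h : M i t ∈ Finset.Icc 1 n := by
      rw [← hM i]; exact Finset.mem_image_of_mem _ (Finset.mem_univ t)
    simpa [Finset.mem_Icc] using h
  have hexu : ∀ (i : Fin (2 * n)) (v : ℕ), 1 ≤ v → v ≤ n → ∃! t, M i t = v := by
    intro i v h1 h2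
    have hv : v ∈ Finset.image (M i) Finset.univ := by
      rw [hM i]; simp [Finset.mem_Icc]; omega
    obtain ⟨t, _, ht⟩ := Finset.mem_image.mp hv
    refine ⟨t, ht, ?_⟩
    intro t' ht'
    have hcard : (Finset.image (M i) Finset.univ).card = (Finset.univ : Finset (Fin n)).card := by
      rw [hM i, Nat.card_Icc, Finset.card_univ, Fintype.card_fin]; omega
    have hinj := Finset.card_image_iff.mp hcard
    exact hinj (Finset.mem_coe.mpr (Finset.mem_univ t')) (Finset.mem_coe.mpr (Finset.mem_univ t))
      (ht'.trans ht.symm)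
  have hnn : n ^ 2 = n * n := by ring
  refine ⟨hbin, ?_, ?_, ?_⟩
  · -- rows
    intro i
    have hi2 : i.val < n * n := by have := i.isLt; omega
    have hsl : i.val / n < n := (Nat.div_lt_iff_lt_mul hn).mpr hi2
    set s : Fin n := ⟨i.val / n, hsl⟩ with hs_def
    set k : ℕ := i.val % n with hk_def
    have hkl : k < n := Nat.mod_lt _ hn
    have hdm : s.val * n + k = i.val := by
      rw [mul_comm]; exact Nat.div_add_mod i.val n
    obtain ⟨t, ht, htu⟩ := hexu (rowT n s) (k + 1) (by omega) (by omega)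
    have hB := hmem (rowB n t) s
    refine ⟨idx n t ⟨M (rowB n t) s - 1, by omega⟩, ?_, ?_⟩
    · refine (hA i _).mpr ⟨s, t, ?_, ?_⟩
      · rw [ht]; omega
      · show (t.val * n + (M (rowB n t) s - 1) : ℕ) = _
        omega
    · intro j' hj'
      obtain ⟨s', t', hi', hj'2⟩ := (hA i j').mp hj'
      have hT' := hmem (rowT n s') t'
      have heq : s'.val * n + (M (rowT n s') t' - 1) = s.val * n + k := by omega
      obtain ⟨he1, he2⟩ := mul_add_inj' hn (by omega) hkl heq
      have hss : s' = s := Fin.ext he1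
      rw [hss] at he2 hT'
      have htt : t' = t := htu t' (by omega)
      rw [hss, htt] at hj'2
      have hB2 := hmem (rowB n t) s
      apply Fin.ext
      show j'.val = t.val * n + (M (rowB n t) s - 1)
      omega
  · -- columns
    intro j
    have hj2 : j.val < n * n := by have := j.isLt; omega
    have htl : j.val / n < n := (Nat.div_lt_iff_lt_mul hn).mpr hj2
    set t : Fin n := ⟨j.val / n, htl⟩ with ht_def
    set l : ℕ := j.val % n with hl_def
    have hll : l < n := Nat.mod_lt _ hn
    have hdm : t.val * n + l = j.val := by
      rw [mul_comm]; exact Nat.div_add_mod j.val n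
    obtain ⟨s, hs, hsu⟩ := hexu (rowB n t) (l + 1) (by omega) (by omega)
    have hT := hmem (rowT n s) t
    refine ⟨idx n s ⟨M (rowT n s) t - 1, by omega⟩, ?_, ?_⟩
    · refine (hA _ j).mpr ⟨s, t, ?_, ?_⟩
      · show (s.val * n + (M (rowT n s) t - 1) : ℕ) = _
        omega
      · rw [hs]; omega
    · intro i' hi'
      obtain ⟨s', t', hi'2, hj'⟩ := (hA i' j).mp hi'
      have hB' := hmem (rowB n t') s'
      have heq : t'.val * n + (M (rowB n t') s' - 1) = t.val * n + l := by omega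
      obtain ⟨he1, he2⟩ := mul_add_inj' hn (by omega) hll heq
      have htt : t' = t := Fin.ext he1
      rw [htt] at he2 hB'
      have hss : s' = s := hsu s' (by omega)
      rw [htt, hss] at hi'2
      have hT2 := hmem (rowT n s) t
      apply Fin.ext
      show i'.val = s.val * n + (M (rowT n s) t - 1)
      omega
  · -- blocks
    intro s t
    have hT := hmem (rowT n s) t
    have hB := hmem (rowB n t) s
    refine ⟨(⟨M (rowT n s) t - 1, by omega⟩, ⟨M (rowB n t) s - 1, by omega⟩), ?_, ?_⟩
    · refine (hA _ _).mpr ⟨s, t, ?_, ?_⟩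
      · show (s.val * n + (M (rowT n s) t - 1) : ℕ) = _
        omega
      · show (t.val * n + (M (rowB n t) s - 1) : ℕ) = _
        omega
    · rintro ⟨k, l⟩ hkl
      obtain ⟨s', t', hi', hj'⟩ := (hA _ _).mp hkl
      have hT' := hmem (rowT n s') t'
      have hB' := hmem (rowB n t') s'
      have hi'' : (idx n s k).val = s'.val * n + M (rowT n s') t' - 1 := hi'
      have hj'' : (idx n t l).val = t'.val * n + M (rowB n t') s' - 1 := hj'
      have heq1 : s'.val * n + (M (rowT n s') t' - 1) = s.val * n + k.val := by
        have : (idx n s k).val = s.val * n + k.val := rfl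
        omega
      have heq2 : t'.val * n + (M (rowB n t') s' - 1) = t.val * n + l.val := by
        have : (idx n t l).val = t.val * n + l.val := rfl
        omega
      obtain ⟨he1, he2⟩ := mul_add_inj' hn (by omega) k.isLt heq1
      obtain ⟨hf1, hf2⟩ := mul_add_inj' hn (by omega) l.isLt heq2
      have hss : s' = s := Fin.ext he1
      have htt : t' = t := Fin.ext hf1
      rw [hss, htt] at he2 hf2 hT' hB'
      have hk : k = ⟨M (rowT n s) t - 1, by omega⟩ := Fin.ext (by simp; omega)
      have hl : l = ⟨M (rowB n t) s - 1, by omega⟩ := Fin.ext (by simp; omega)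
      rw [hk, hl]
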